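/- If X is a d-dimensional γ-two-sided link expander (λ(A_s) ≤ γ for every link X_s), then for every i < d and every f ∈ C^i, |⟨(M⁺_i − U_{i−1}D_i) f, f⟩| ≤ γ‖f‖²; hence X is a γ-HDX. -/

import Mathlib

open Finset

noncomputable section

/-- A pure `d`-dimensional weighted simplicial complex on a finite vertex set `V`:
a nonempty collection of top faces, each of cardinality `d+1`, together with a
probability distribution on the top faces which is positive on them.  (Faces of
cardinality `j` correspond to faces of dimension `j-1`, i.e. of level `j-1`, in
the paper's indexing; the empty face has level `-1`.) -/
structure WSC (V : Type) [DecidableEq V] [Fintype V] (d : ℕ) : Type where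
  top : Finset (Finset V)
  top_nonempty : top.Nonempty
  pure : ∀ s ∈ top, s.card = d + 1
  w : Finset V → ℝ
  w_pos : ∀ s ∈ top, 0 < w s
  w_supp : ∀ s, s ∉ top → w s = 0
  w_sum : ∑ s ∈ top, w s = 1

namespace WSC

variable {V : Type} [DecidableEq V] [Fintype V] {d : ℕ} (X : WSC V d)

/-- The faces of cardinality `j`, i.e. the set `X(j-1)` in the paper's indexing. -/
def faces (j : ℕ) : Finset (Finset V) :=
  (Finset.univ : Finset V).powerset.filter (fun t => t.card = j ∧ ∃ s ∈ X.top, t ⊆ s)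

/-- All faces of the complex. -/
def allFaces : Finset (Finset V) :=
  (Finset.univ : Finset V).powerset.filter (fun t => ∃ s ∈ X.top, t ⊆ s)

/-- The induced distribution `Dist_{j-1}` on the faces of cardinality `j`:
choose a top face according to `w` and then a uniformly random subset of
cardinality `j` of it. -/
def dist (j : ℕ) (t : Finset V) : ℝ :=
  (∑ s ∈ X.top.filter (fun s => t ⊆ s), X.w s) / (d + 1).choose j

/-- The weighted inner product on the space `C^{j-1}` of functions on the faces
of cardinality `j`. -/
def ip (j : ℕ) (f g : Finset V → ℝ) : ℝ :=
  ∑ t ∈ X.faces j, X.dist j t * f t * g t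

/-- The up (averaging) operator `U_{j-1}` sending functions on cardinality-`j`
faces to functions on cardinality-`(j+1)` faces. -/
def up (_X : WSC V d) (j : ℕ) (g : Finset V → ℝ) : Finset V → ℝ :=
  fun s => (∑ x ∈ s, g (s.erase x)) / ((j : ℝ) + 1)

/-- The down (averaging) operator `D_{j-1}` sending functions on cardinality-`j`
faces to functions on cardinality-`(j-1)` faces. -/
def down (j : ℕ) (f : Finset V → ℝ) : Finset V → ℝ :=
  fun t => (∑ s ∈ (X.faces j).filter (fun s => t ⊆ s), X.dist j s * f s) /
    ((j : ℝ) * X.dist (j - 1) t)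

/-- `m`-fold iterate of the up operator, starting from cardinality `j`. -/
def upIter (X : WSC V d) (j : ℕ) : ℕ → (Finset V → ℝ) → (Finset V → ℝ)
  | 0, g => g
  | (m+1), g => X.up (j + m) (upIter X j m g)

/-- `ys s` is the indicator function of containing the face `s`. -/
def ys (s t : Finset V) : ℝ := if s ⊆ t then 1 else 0

/-- `ys s` viewed as a function on the top faces `X(d)` (zero elsewhere). -/
def ysRes (s : Finset V) : Finset V → ℝ :=
  fun r => if r ∈ X.faces (d + 1) ∧ s ⊆ r then 1 else 0

/-- `X` is proper: all the up operators `U_i`, `-1 ≤ i ≤ d-1`, have trivial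
kernel (as operators on functions supported on the faces). -/
def Proper : Prop :=
  ∀ j, j ≤ d → ∀ g : Finset V → ℝ,
    (∀ t, t ∉ X.faces j → g t = 0) →
    (∀ s ∈ X.faces (j + 1), X.up j g s = 0) →
    ∀ t, g t = 0

/-- `h` is a harmonic function at cardinality `j`, i.e. an element of
`H^{j-1} = ker D_{j-1}` (for `j = 0` this is all of `C^{-1}`). -/
def Harmonic (j : ℕ) (h : Finset V → ℝ) : Prop :=
  (∀ t, t ∉ X.faces j → h t = 0) ∧
  (1 ≤ j → ∀ t ∈ X.faces (j - 1), X.down j h t = 0)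

/-- The non-lazy upper random walk `M⁺_{j-1}` on functions on cardinality-`j`
faces: go up to a random cardinality-`(j+1)` face and back down to a distinct
cardinality-`j` face. -/
def Mplus (j : ℕ) (f : Finset V → ℝ) : Finset V → ℝ :=
  fun t => ∑ s ∈ (X.faces (j + 1)).filter (fun s => t ⊆ s),
    (X.dist (j + 1) s / (((j : ℝ) + 1) * X.dist j t)) *
      ((∑ x ∈ t, f (s.erase x)) / (j : ℝ))

/-- The lower random walk `U_{j-2} D_{j-1}` on functions on cardinality-`j` faces. -/
def lower (j : ℕ) (f : Finset V → ℝ) : Finset V → ℝ :=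
  fun t => X.up (j - 1) (X.down j f) t

/-- `X` is a `γ`-high-dimensional expander: `‖M⁺_j - U_{j-1} D_j‖ ≤ γ` for all
paper levels `0 ≤ j ≤ d-1`, where the operator norm is with respect to the
weighted `L²` structure, expressed via quadratic forms. -/
def IsHDX (γ : ℝ) : Prop :=
  ∀ j, j + 1 ≤ d → ∀ f : Finset V → ℝ,
    X.ip (j + 1) (fun t => X.Mplus (j + 1) f t - X.lower (j + 1) f t)
      (fun t => X.Mplus (j + 1) f t - X.lower (j + 1) f t)
    ≤ γ ^ 2 * X.ip (j + 1) f f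

/-- The probability that a random cardinality-`m` face contains `r`. -/
def distAbove (m : ℕ) (r : Finset V) : ℝ :=
  ∑ s ∈ (X.faces m).filter (fun s => r ⊆ s), X.dist m s

/-- Expectation of a vertex function of the link of `r` under the link's vertex
distribution. -/
def linkEv (r : Finset V) (f : V → ℝ) : ℝ :=
  ∑ s ∈ (X.faces (r.card + 1)).filter (fun s => r ⊆ s),
    (X.dist (r.card + 1) s / X.distAbove (r.card + 1) r) * ∑ x ∈ s \ r, f x

/-- Expectation of `f(x) · g(y)` over a uniformly oriented random edge `(x,y)`
of the underlying graph of the link of `r`, i.e. the quadratic form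
`⟨f, A_r g⟩` of the link's adjacency operator. -/
def linkEe (r : Finset V) (f g : V → ℝ) : ℝ :=
  ∑ s ∈ (X.faces (r.card + 2)).filter (fun s => r ⊆ s),
    (X.dist (r.card + 2) s / X.distAbove (r.card + 2) r) *
      ((∑ x ∈ s \ r, ∑ y ∈ (s \ r).erase x, f x * g y) / 2)

/-- The two-sided spectral bound `λ(A_r) ≤ γ` for the underlying graph of the
link of `r`, in its equivalent quadratic-form formulation
`|⟨f, A_r g⟩ - E[f]·E[g]| ≤ γ‖f‖‖g‖`. -/
def LinkBound (r : Finset V) (γ : ℝ) : Prop :=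
  ∀ f g : V → ℝ,
    |X.linkEe r f g - X.linkEv r f * X.linkEv r g| ≤
      γ * Real.sqrt (X.linkEv r (fun x => f x ^ 2)) *
        Real.sqrt (X.linkEv r (fun x => g x ^ 2))

/-- `X` is a `γ`-two-sided link expander: every link (with a nonempty underlying
graph) satisfies `λ(A_r) ≤ γ`. -/
def TwoSidedLinkExpander (γ : ℝ) : Prop :=
  ∀ r ∈ X.allFaces, r.card + 2 ≤ d + 1 → X.LinkBound r γ

set_option linter.unusedSectionVars false

/-- Total weight of top faces containing `t`. -/
def Wt (t : Finset V) : ℝ := ∑ s ∈ X.top.filter (fun s => t ⊆ s), X.w s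

lemma mem_faces {t : Finset V} {m : ℕ} :
    t ∈ X.faces m ↔ t.card = m ∧ ∃ s ∈ X.top, t ⊆ s := by
  simp [faces]

lemma mem_faces_of_subset {t r : Finset V} {m : ℕ} (ht : t ∈ X.faces m) (hrt : r ⊆ t) :
    r ∈ X.faces r.card := by
  obtain ⟨-, s, hs, hts⟩ := X.mem_faces.1 ht
  exact X.mem_faces.2 ⟨rfl, s, hs, hrt.trans hts⟩

lemma Wt_nonneg (t : Finset V) : 0 ≤ X.Wt t := by
  refine Finset.sum_nonneg fun s hs => ?_
  exact (X.w_pos s (Finset.mem_filter.1 hs).1).le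

lemma Wt_pos {t : Finset V} (h : ∃ s ∈ X.top, t ⊆ s) : 0 < X.Wt t := by
  obtain ⟨s, hs, hts⟩ := h
  refine Finset.sum_pos (fun r hr => X.w_pos r (Finset.mem_filter.1 hr).1) ⟨s, ?_⟩
  exact Finset.mem_filter.2 ⟨hs, hts⟩

lemma dist_def (m : ℕ) (t : Finset V) : X.dist m t = X.Wt t / (d + 1).choose m := rfl

lemma dist_nonneg' (m : ℕ) (t : Finset V) : 0 ≤ X.dist m t :=
  div_nonneg (X.Wt_nonneg t) (by positivity)

lemma dist_pos {m : ℕ} {t : Finset V} (hm : m ≤ d + 1) (ht : t ∈ X.faces m) :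
    0 < X.dist m t := by
  refine div_pos (X.Wt_pos (X.mem_faces.1 ht).2) ?_
  exact_mod_cast Nat.cast_pos.2 (Nat.choose_pos hm)

/-- counting: number of `m`-subsets of `T` containing `r`. -/
lemma count_subsets {r T : Finset V} (hrT : r ⊆ T) {m : ℕ} (hm : r.card ≤ m) :
    ((T.powersetCard m).filter (fun s => r ⊆ s)).card
      = (T.card - r.card).choose (m - r.card) := by
  rw [show T.card - r.card = (T \ r).card from (Finset.card_sdiff_of_subset hrT).symm,
    ← Finset.card_powersetCard]
  apply Finset.card_bij' (fun s _ => s \ r) (fun u _ => u ∪ r)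
  · intro s hs
    simp only [Finset.mem_filter, Finset.mem_powersetCard] at hs ⊢
    obtain ⟨⟨hsT, hcard⟩, hrs⟩ := hs
    exact ⟨Finset.sdiff_subset_sdiff hsT (le_refl r), by rw [Finset.card_sdiff_of_subset hrs, hcard]⟩
  · intro u hu
    simp only [Finset.mem_filter, Finset.mem_powersetCard, Finset.mem_sdiff] at hu ⊢
    obtain ⟨huTr, hcard⟩ := hu
    have hur : Disjoint u r := Finset.disjoint_left.2 fun a ha => ((Finset.mem_sdiff.1 (huTr ha)).2)
    constructor
    · constructor
      · exact Finset.union_subset ((huTr.trans Finset.sdiff_subset)) hrT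
      · rw [Finset.card_union_of_disjoint hur, hcard, Nat.sub_add_cancel hm]
    · exact Finset.subset_union_right
  · intro s hs
    simp only [Finset.mem_filter, Finset.mem_powersetCard] at hs
    exact Finset.sdiff_union_of_subset hs.2
  · intro u hu
    simp only [Finset.mem_powersetCard, Finset.mem_sdiff] at hu
    have hur : Disjoint u r := Finset.disjoint_left.2 fun a ha => ((Finset.mem_sdiff.1 (hu.1 ha)).2)
    exact Finset.union_sdiff_cancel_right hur
/-- Key double counting: the total `Wt`-weight of `m`-faces containing `r`. -/
lemma countK {r : Finset V} {m : ℕ} (hm : r.card ≤ m) :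
    ∑ s ∈ (X.faces m).filter (fun s => r ⊆ s), X.Wt s
      = ((d + 1 - r.card).choose (m - r.card) : ℝ) * X.Wt r := by
  unfold Wt
  rw [Finset.sum_comm' (t' := X.top)
      (s' := fun T => ((X.faces m).filter (fun s => r ⊆ s)).filter (fun s => s ⊆ T))
      (fun s T => by
        simp only [Finset.mem_filter]
        tauto)]
  rw [Finset.mul_sum, Finset.sum_filter]
  refine Finset.sum_congr rfl fun T hT => ?_
  rw [Finset.sum_const, nsmul_eq_mul]
  by_cases hrT : r ⊆ T
  · rw [if_pos hrT]
    have hset : ((X.faces m).filter (fun s => r ⊆ s)).filter (fun s => s ⊆ T)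
        = (T.powersetCard m).filter (fun s => r ⊆ s) := by
      ext s
      simp only [Finset.mem_filter, Finset.mem_powersetCard, mem_faces]
      constructor
      · rintro ⟨⟨⟨hc, -⟩, hrs⟩, hsT⟩
        exact ⟨⟨hsT, hc⟩, hrs⟩
      · rintro ⟨⟨hsT, hc⟩, hrs⟩
        exact ⟨⟨⟨hc, T, hT, hsT⟩, hrs⟩, hsT⟩
    rw [hset, count_subsets hrT hm, X.pure T hT]
  · rw [if_neg hrT]
    have hset : ((X.faces m).filter (fun s => r ⊆ s)).filter (fun s => s ⊆ T) = ∅ := by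
      ext s
      simp only [Finset.mem_filter, Finset.notMem_empty, iff_false]
      rintro ⟨⟨-, hrs⟩, hsT⟩
      exact hrT (hrs.trans hsT)
    rw [hset]
    simp

lemma distAbove_eq {r : Finset V} {m : ℕ} (hm : r.card ≤ m) :
    X.distAbove m r
      = ((d + 1 - r.card).choose (m - r.card) : ℝ) / ((d + 1).choose m) * X.Wt r := by
  unfold distAbove
  simp only [dist_def, ← Finset.sum_div]
  rw [X.countK hm]
  ring
lemma ratio_nat (n i : ℕ) :
    2 * ((n - i).choose 2) * n.choose i = (i + 1) * (i + 2) * n.choose (i + 2) := by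
  have h1 := Nat.choose_succ_right_eq n i
  have h2 := Nat.choose_succ_right_eq n (i + 1)
  have h3 := Nat.choose_succ_right_eq (n - i) 1
  rw [Nat.choose_one_right] at h3
  have hs : n - (i + 1) = n - i - 1 := by omega
  rw [hs] at h2
  calc 2 * ((n - i).choose 2) * n.choose i
      = ((n - i).choose 2 * 2) * n.choose i := by ring
    _ = ((n - i) * (n - i - 1)) * n.choose i := by rw [h3]
    _ = (n.choose i * (n - i)) * (n - i - 1) := by ring
    _ = (n.choose (i + 1) * (i + 1)) * (n - i - 1) := by rw [h1]
    _ = (n.choose (i + 1) * (n - i - 1)) * (i + 1) := by ring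
    _ = (n.choose (i + 2) * (i + 2)) * (i + 1) := by rw [h2]
    _ = (i + 1) * (i + 2) * n.choose (i + 2) := by ring

lemma distAbove_one {r : Finset V} {i : ℕ} (hc : r.card = i) (him : i + 1 ≤ d + 1) :
    X.distAbove (i + 1) r = ((i : ℝ) + 1) * X.dist i r := by
  have hC0 : ((d + 1).choose i : ℝ) ≠ 0 := by
    exact_mod_cast (Nat.choose_pos (by omega)).ne'
  have hC1 : ((d + 1).choose (i + 1) : ℝ) ≠ 0 := by
    exact_mod_cast (Nat.choose_pos him).ne'
  rw [X.distAbove_eq (by omega : r.card ≤ i + 1), hc, dist_def]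
  have h2 : i + 1 - i = 1 := by omega
  rw [h2, Nat.choose_one_right]
  have key : ((d + 1 - i : ℕ) : ℝ) / ((d + 1).choose (i + 1) : ℕ)
      = ((i : ℝ) + 1) / ((d + 1).choose i : ℕ) := by
    rw [div_eq_div_iff hC1 hC0]
    have hnat : (d + 1 - i) * (d + 1).choose i = (i + 1) * (d + 1).choose (i + 1) := by
      rw [mul_comm, ← Nat.choose_succ_right_eq, mul_comm]
    exact_mod_cast hnat
  rw [key]
  ring

lemma distAbove_two {r : Finset V} {i : ℕ} (hc : r.card = i) (him : i + 2 ≤ d + 1) :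
    X.distAbove (i + 2) r = ((i : ℝ) + 1) * ((i : ℝ) + 2) / 2 * X.dist i r := by
  have hC0 : ((d + 1).choose i : ℝ) ≠ 0 := by
    exact_mod_cast (Nat.choose_pos (by omega)).ne'
  have hC2 : ((d + 1).choose (i + 2) : ℝ) ≠ 0 := by
    exact_mod_cast (Nat.choose_pos him).ne'
  rw [X.distAbove_eq (by omega : r.card ≤ i + 2), hc, dist_def]
  have h2 : i + 2 - i = 2 := by omega
  rw [h2]
  have hr : (2 : ℝ) * ((d + 1 - i).choose 2 : ℕ) * ((d + 1).choose i : ℕ)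
      = ((i : ℝ) + 1) * ((i : ℝ) + 2) * ((d + 1).choose (i + 2) : ℕ) := by
    exact_mod_cast ratio_nat (d + 1) i
  have key : (((d + 1 - i).choose 2 : ℕ) : ℝ) / ((d + 1).choose (i + 2) : ℕ)
      = (((i : ℝ) + 1) * ((i : ℝ) + 2) / 2) / ((d + 1).choose i : ℕ) := by
    rw [div_eq_div_iff hC2 hC0]
    linarith
  rw [key]
  ring

lemma faces_filter_subset_eq_image {s : Finset V} {m : ℕ} (hs : s ∈ X.faces (m + 1)) :
    (X.faces m).filter (fun t => t ⊆ s) = s.image s.erase := by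
  have hcs : s.card = m + 1 := (X.mem_faces.1 hs).1
  obtain ⟨-, T, hT, hsT⟩ := X.mem_faces.1 hs
  ext t
  simp only [Finset.mem_filter, Finset.mem_image, mem_faces]
  constructor
  · rintro ⟨⟨hct, -⟩, hts⟩
    have h1 : (s \ t).card = 1 := by rw [Finset.card_sdiff_of_subset hts, hcs, hct]; omega
    obtain ⟨y, hy⟩ := Finset.card_eq_one.1 h1
    have hys : y ∈ s \ t := hy ▸ Finset.mem_singleton_self y
    refine ⟨y, (Finset.mem_sdiff.1 hys).1, ?_⟩
    have hsub : t ⊆ s.erase y := by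
      intro x hx
      refine Finset.mem_erase.2 ⟨?_, hts hx⟩
      rintro rfl
      exact (Finset.mem_sdiff.1 hys).2 hx
    have hle : (s.erase y).card ≤ t.card := by
      rw [Finset.card_erase_of_mem (Finset.mem_sdiff.1 hys).1, hcs, hct]; omega
    exact (Finset.eq_of_subset_of_card_le hsub hle).symm
  · rintro ⟨y, hys, rfl⟩
    refine ⟨⟨?_, T, hT, (Finset.erase_subset y s).trans hsT⟩, Finset.erase_subset y s⟩
    rw [Finset.card_erase_of_mem hys, hcs]
    omega

lemma sum_faces_filter_subset {s : Finset V} {m : ℕ} (hs : s ∈ X.faces (m + 1))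
    (F : Finset V → ℝ) :
    ∑ t ∈ (X.faces m).filter (fun t => t ⊆ s), F t = ∑ y ∈ s, F (s.erase y) := by
  rw [X.faces_filter_subset_eq_image hs]
  exact Finset.sum_image fun x hx y hy h =>
    s.erase_injOn (Finset.mem_coe.2 hx) (Finset.mem_coe.2 hy) h

lemma card_faces_filter_subset {s : Finset V} {m : ℕ} (hs : s ∈ X.faces (m + 1)) :
    ((X.faces m).filter (fun t => t ⊆ s)).card = m + 1 := by
  rw [X.faces_filter_subset_eq_image hs, Finset.card_image_of_injOn s.erase_injOn,
    (X.mem_faces.1 hs).1]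

lemma sum_erase_comm {α : Type*} [DecidableEq α] (s : Finset α) (a : α → α → ℝ) :
    ∑ x ∈ s, ∑ y ∈ s.erase x, a x y = ∑ y ∈ s, ∑ x ∈ s.erase y, a x y := by
  simp only [← Finset.filter_ne', Finset.sum_filter]
  rw [Finset.sum_comm]
  refine Finset.sum_congr rfl fun y _ => Finset.sum_congr rfl fun x _ => ?_
  exact if_congr ne_comm rfl rfl
lemma triple_sum {s : Finset V} {i : ℕ} (hs : s ∈ X.faces (i + 2)) (F : V → V → ℝ) :
    ∑ r ∈ (X.faces i).filter (fun r => r ⊆ s), ∑ x ∈ s \ r, ∑ y ∈ (s \ r).erase x, F x y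
      = ∑ x ∈ s, ∑ y ∈ s.erase x, F x y := by
  have hcs : s.card = i + 2 := (X.mem_faces.1 hs).1
  obtain ⟨-, T, hT, hsT⟩ := X.mem_faces.1 hs
  rw [Finset.sum_sigma' ((X.faces i).filter (fun r => r ⊆ s)) _
      (fun r x => ∑ y ∈ (s \ r).erase x, F x y),
    Finset.sum_sigma' (((X.faces i).filter (fun r => r ⊆ s)).sigma (fun r => s \ r))
      (fun p => (s \ p.1).erase p.2) (fun p y => F p.2 y),
    Finset.sum_sigma' s _ (fun x y => F x y)]
  refine Finset.sum_nbij' (fun q => ⟨q.1.2, q.2⟩)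
    (fun q => ⟨⟨(s.erase q.1).erase q.2, q.1⟩, q.2⟩) ?_ ?_ ?_ ?_ ?_
  · rintro ⟨⟨r, x⟩, y⟩ hq
    simp only [Finset.mem_sigma, Finset.mem_filter, Finset.mem_sdiff, Finset.mem_erase,
      mem_faces] at hq ⊢
    obtain ⟨⟨⟨hrf, hrs⟩, hx, hxr⟩, hy⟩ := hq
    exact ⟨hx, hy.1, hy.2.1⟩
  · rintro ⟨x, y⟩ hq
    simp only [Finset.mem_sigma, Finset.mem_filter, Finset.mem_sdiff, Finset.mem_erase,
      mem_faces] at hq ⊢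
    obtain ⟨hx, hyx, hy⟩ := hq
    have hyex : y ∈ s.erase x := Finset.mem_erase.2 ⟨hyx, hy⟩
    have hcard : ((s.erase x).erase y).card = i := by
      rw [Finset.card_erase_of_mem hyex, Finset.card_erase_of_mem hx, hcs]
      omega
    have hsub : (s.erase x).erase y ⊆ s := (Finset.erase_subset _ _).trans (Finset.erase_subset _ _)
    refine ⟨⟨⟨⟨hcard, T, hT, hsub.trans hsT⟩, hsub⟩, hx, fun hxin => ?_⟩, ⟨?_, hy, fun hyin => ?_⟩⟩
    · exact hxin.2.1 rfl
    · exact hyx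
    · exact hyin.1 rfl
  · rintro ⟨⟨r, x⟩, y⟩ hq
    simp only [Finset.mem_sigma, Finset.mem_filter, Finset.mem_sdiff, Finset.mem_erase,
      mem_faces] at hq
    obtain ⟨⟨⟨⟨hcr, -⟩, hrs⟩, hx, hxr⟩, hyx, hy, hyr⟩ := hq
    have hre : (s.erase x).erase y = r := by
      have hsub : r ⊆ (s.erase x).erase y := fun a ha =>
        Finset.mem_erase.2 ⟨fun h => hyr (h ▸ ha), Finset.mem_erase.2
          ⟨fun h => hxr (h ▸ ha), hrs ha⟩⟩
      have hle : ((s.erase x).erase y).card ≤ r.card := by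
        rw [Finset.card_erase_of_mem (Finset.mem_erase.2 ⟨hyx, hy⟩),
          Finset.card_erase_of_mem hx, hcs, hcr]
        omega
      exact (Finset.eq_of_subset_of_card_le hsub hle).symm
    simp [hre]
  · rintro ⟨x, y⟩ hq
    rfl
  · rintro ⟨⟨r, x⟩, y⟩ hq
    rfl
lemma Mform {i : ℕ} (hi : i + 1 ≤ d) (f g : Finset V → ℝ) :
    X.ip (i + 1) (X.Mplus (i + 1) f) g
      = ∑ s ∈ X.faces (i + 1 + 1), X.dist (i + 1 + 1) s *
          (∑ y ∈ s, ∑ x ∈ s.erase y, f (s.erase x) * g (s.erase y))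
            / (((i : ℝ) + 1) * ((i : ℝ) + 2)) := by
  have h1 : ((i : ℝ) + 1) ≠ 0 := by positivity
  have h2 : ((i : ℝ) + 2) ≠ 0 := by positivity
  unfold ip
  have step1 : ∀ t ∈ X.faces (i + 1), X.dist (i + 1) t * X.Mplus (i + 1) f t * g t
      = ∑ s ∈ (X.faces (i + 1 + 1)).filter (fun s => t ⊆ s),
          X.dist (i + 1 + 1) s * ((∑ x ∈ t, f (s.erase x)) * g t)
            / (((i : ℝ) + 1) * ((i : ℝ) + 2)) := by
    intro t ht
    have hd : X.dist (i + 1) t ≠ 0 := (X.dist_pos (by omega) ht).ne'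
    unfold Mplus
    rw [Finset.mul_sum, Finset.sum_mul]
    refine Finset.sum_congr rfl fun s hs => ?_
    push_cast
    field_simp
    ring
  rw [Finset.sum_congr rfl step1,
    Finset.sum_comm' (t' := X.faces (i + 1 + 1))
      (s' := fun s => (X.faces (i + 1)).filter (fun t => t ⊆ s))
      (fun t s => by simp only [Finset.mem_filter]; tauto)]
  refine Finset.sum_congr rfl fun s hs => ?_
  rw [X.sum_faces_filter_subset hs]
  simp only [Finset.sum_mul, Finset.mul_sum, Finset.sum_div]

lemma Ee_eq {i : ℕ} (hi : i + 1 ≤ d) {r : Finset V} (hr : r ∈ X.faces i)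
    (f g : Finset V → ℝ) :
    X.dist i r * X.linkEe r (fun x => f (insert x r)) (fun x => g (insert x r))
      = ∑ s ∈ (X.faces (i + 2)).filter (fun s => r ⊆ s),
          X.dist (i + 2) s *
            (∑ x ∈ s \ r, ∑ y ∈ (s \ r).erase x, f (s.erase y) * g (s.erase x))
              / (((i : ℝ) + 1) * ((i : ℝ) + 2)) := by
  have h1 : ((i : ℝ) + 1) ≠ 0 := by positivity
  have h2 : ((i : ℝ) + 2) ≠ 0 := by positivity
  have hc : r.card = i := (X.mem_faces.1 hr).1
  have hdr : X.dist i r ≠ 0 := (X.dist_pos (by omega) hr).ne'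
  have hdA : X.distAbove (i + 2) r = ((i : ℝ) + 1) * ((i : ℝ) + 2) / 2 * X.dist i r :=
    X.distAbove_two hc (by omega)
  unfold linkEe
  rw [hc, Finset.mul_sum]
  refine Finset.sum_congr rfl fun s hs => ?_
  obtain ⟨hsf, hrs⟩ := Finset.mem_filter.1 hs
  have hcs : s.card = i + 2 := (X.mem_faces.1 hsf).1
  have hins : ∀ x ∈ s \ r, ∀ y ∈ (s \ r).erase x, insert x r = s.erase y := by
    intro x hx y hy
    obtain ⟨hxs, hxr⟩ := Finset.mem_sdiff.1 hx
    obtain ⟨hyx, hy'⟩ := Finset.mem_erase.1 hy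
    obtain ⟨hys, hyr⟩ := Finset.mem_sdiff.1 hy'
    have hsub : insert x r ⊆ s.erase y := by
      intro a ha
      rcases Finset.mem_insert.1 ha with rfl | har
      · exact Finset.mem_erase.2 ⟨fun h => hyx h.symm, hxs⟩
      · exact Finset.mem_erase.2 ⟨fun h => hyr (h ▸ har), hrs har⟩
    have hle : (s.erase y).card ≤ (insert x r).card := by
      rw [Finset.card_erase_of_mem hys, Finset.card_insert_of_notMem hxr, hcs, hc]
      omega
    exact Finset.eq_of_subset_of_card_le hsub hle
  have hinner : (∑ x ∈ s \ r, ∑ y ∈ (s \ r).erase x,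
        f (insert x r) * g (insert y r))
      = ∑ x ∈ s \ r, ∑ y ∈ (s \ r).erase x, f (s.erase y) * g (s.erase x) := by
    refine Finset.sum_congr rfl fun x hx => Finset.sum_congr rfl fun y hy => ?_
    have e1 : insert x r = s.erase y := hins x hx y hy
    have hx' : x ∈ (s \ r).erase y := by
      obtain ⟨hyx, hy'⟩ := Finset.mem_erase.1 hy
      exact Finset.mem_erase.2 ⟨fun h => hyx h.symm, hx⟩
    have hy'' : y ∈ s \ r := (Finset.mem_erase.1 hy).2
    have e2 : insert y r = s.erase x := hins y hy'' x hx'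
    rw [e1, e2]
  rw [hinner, hdA]
  field_simp

lemma linkEe_sum {i : ℕ} (hi : i + 1 ≤ d) (f g : Finset V → ℝ) :
    ∑ r ∈ X.faces i,
        X.dist i r * X.linkEe r (fun x => f (insert x r)) (fun x => g (insert x r))
      = ∑ s ∈ X.faces (i + 2), X.dist (i + 2) s *
          (∑ x ∈ s, ∑ y ∈ s.erase x, f (s.erase y) * g (s.erase x))
            / (((i : ℝ) + 1) * ((i : ℝ) + 2)) := by
  rw [Finset.sum_congr rfl (fun r hr => X.Ee_eq hi hr f g),
    Finset.sum_comm' (t' := X.faces (i + 2))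
      (s' := fun s => (X.faces i).filter (fun r => r ⊆ s))
      (fun r s => by simp only [Finset.mem_filter]; tauto)]
  refine Finset.sum_congr rfl fun s hs => ?_
  rw [← Finset.sum_div, ← Finset.mul_sum, ← X.triple_sum hs
    (fun x y => f (s.erase y) * g (s.erase x))]
lemma down_num {i : ℕ} (hi : i + 1 ≤ d + 1) {r : Finset V} (hr : r ∈ X.faces i)
    (g : Finset V → ℝ) :
    ∑ t ∈ (X.faces (i + 1)).filter (fun t => r ⊆ t), X.dist (i + 1) t * g t
      = ((i : ℝ) + 1) * X.dist i r * X.down (i + 1) g r := by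
  have hdr : X.dist i r ≠ 0 := (X.dist_pos (by omega) hr).ne'
  have h1 : ((i : ℝ) + 1) ≠ 0 := by positivity
  unfold down
  simp only [Nat.add_sub_cancel]
  push_cast
  field_simp

lemma Ev_eq {i : ℕ} (hi : i + 1 ≤ d + 1) {r : Finset V} (hr : r ∈ X.faces i)
    (h : Finset V → ℝ) :
    X.dist i r * X.linkEv r (fun x => h (insert x r))
      = (∑ t ∈ (X.faces (i + 1)).filter (fun t => r ⊆ t), X.dist (i + 1) t * h t)
          / ((i : ℝ) + 1) := by
  have hc : r.card = i := (X.mem_faces.1 hr).1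
  have hdr : X.dist i r ≠ 0 := (X.dist_pos (by omega) hr).ne'
  have h1 : ((i : ℝ) + 1) ≠ 0 := by positivity
  unfold linkEv
  rw [hc, X.distAbove_one hc hi, Finset.mul_sum, Finset.sum_div]
  refine Finset.sum_congr rfl fun s hs => ?_
  obtain ⟨hsf, hrs⟩ := Finset.mem_filter.1 hs
  have hcs : s.card = i + 1 := (X.mem_faces.1 hsf).1
  have hin : ∀ x ∈ s \ r, insert x r = s := by
    intro x hx
    obtain ⟨hxs, hxr⟩ := Finset.mem_sdiff.1 hx
    refine Finset.eq_of_subset_of_card_le (Finset.insert_subset hxs hrs) ?_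
    rw [Finset.card_insert_of_notMem hxr, hcs, hc]
  rw [Finset.sum_congr rfl (fun x hx => show h (insert x r) = h s by rw [hin x hx]),
    Finset.sum_const,
    Finset.card_sdiff_of_subset hrs, hcs, hc]
  have h2 : i + 1 - i = 1 := by omega
  rw [h2, one_smul]
  field_simp

lemma down_eq_linkEv {i : ℕ} (hi : i + 1 ≤ d + 1) {r : Finset V} (hr : r ∈ X.faces i)
    (f : Finset V → ℝ) :
    X.down (i + 1) f r = X.linkEv r (fun x => f (insert x r)) := by
  have hdr : X.dist i r ≠ 0 := (X.dist_pos (by omega) hr).ne'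
  have h1 : ((i : ℝ) + 1) ≠ 0 := by positivity
  have he := X.Ev_eq hi hr f
  rw [X.down_num hi hr f] at he
  refine (mul_left_cancel₀ hdr ?_).symm
  rw [he]
  field_simp

lemma Lform {i : ℕ} (hi : i + 1 ≤ d) (f g : Finset V → ℝ) :
    X.ip (i + 1) (X.lower (i + 1) f) g
      = ∑ r ∈ X.faces i, X.dist i r * X.down (i + 1) f r * X.down (i + 1) g r := by
  have h1 : ((i : ℝ) + 1) ≠ 0 := by positivity
  unfold ip lower up
  simp only [Nat.add_sub_cancel]
  have step1 : ∀ t ∈ X.faces (i + 1),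
      X.dist (i + 1) t * ((∑ x ∈ t, X.down (i + 1) f (t.erase x)) / ((i : ℝ) + 1)) * g t
        = ∑ r ∈ (X.faces i).filter (fun r => r ⊆ t),
            X.dist (i + 1) t * X.down (i + 1) f r * g t / ((i : ℝ) + 1) := by
    intro t ht
    rw [← X.sum_faces_filter_subset ht (fun r => X.down (i + 1) f r)]
    rw [Finset.sum_div, Finset.mul_sum, Finset.sum_mul]
    exact Finset.sum_congr rfl fun r _ => by ring
  rw [Finset.sum_congr rfl step1,
    Finset.sum_comm' (t' := X.faces i)
      (s' := fun r => (X.faces (i + 1)).filter (fun t => r ⊆ t))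
      (fun t r => by simp only [Finset.mem_filter]; tauto)]
  refine Finset.sum_congr rfl fun r hr => ?_
  have step2 : ∑ t ∈ (X.faces (i + 1)).filter (fun t => r ⊆ t),
      X.dist (i + 1) t * X.down (i + 1) f r * g t / ((i : ℝ) + 1)
        = (X.down (i + 1) f r / ((i : ℝ) + 1))
            * ∑ t ∈ (X.faces (i + 1)).filter (fun t => r ⊆ t), X.dist (i + 1) t * g t := by
    rw [Finset.mul_sum]
    exact Finset.sum_congr rfl fun t _ => by ring
  rw [step2, X.down_num (by omega) hr g]
  field_simp

lemma ip_self_eq {i : ℕ} (hi : i + 1 ≤ d) (f : Finset V → ℝ) :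
    ∑ r ∈ X.faces i, X.dist i r * X.linkEv r (fun x => f (insert x r) ^ 2)
      = X.ip (i + 1) f f := by
  have h1 : ((i : ℝ) + 1) ≠ 0 := by positivity
  rw [Finset.sum_congr rfl (fun r hr => X.Ev_eq (by omega) hr (fun t => f t ^ 2))]
  simp only [Finset.sum_div, ← Finset.sum_filter]
  rw [Finset.sum_comm' (t' := X.faces (i + 1))
      (s' := fun t => (X.faces i).filter (fun r => r ⊆ t))
      (fun r t => by simp only [Finset.mem_filter]; tauto)]
  unfold ip
  refine Finset.sum_congr rfl fun t ht => ?_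
  rw [Finset.sum_const, X.card_faces_filter_subset ht, nsmul_eq_mul]
  push_cast
  field_simp
lemma distAbove_nonneg (m : ℕ) (r : Finset V) : 0 ≤ X.distAbove m r :=
  Finset.sum_nonneg fun s _ => X.dist_nonneg' m s

lemma linkEv_sq_nonneg (r : Finset V) (g : V → ℝ) :
    0 ≤ X.linkEv r (fun x => g x ^ 2) :=
  Finset.sum_nonneg fun s _ => mul_nonneg
    (div_nonneg (X.dist_nonneg' _ s) (X.distAbove_nonneg _ r))
    (Finset.sum_nonneg fun x _ => sq_nonneg _)

lemma mem_allFaces_of_mem_faces {r : Finset V} {m : ℕ} (hr : r ∈ X.faces m) :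
    r ∈ X.allFaces := by
  obtain ⟨-, hs⟩ := X.mem_faces.1 hr
  exact Finset.mem_filter.2 ⟨Finset.mem_powerset.2 (Finset.subset_univ r), hs⟩

lemma ip_sub (j : ℕ) (A B g : Finset V → ℝ) :
    X.ip j (fun t => A t - B t) g = X.ip j A g - X.ip j B g := by
  unfold ip
  rw [← Finset.sum_sub_distrib]
  exact Finset.sum_congr rfl fun t _ => by ring

lemma main1 {γ : ℝ} (hγ0 : 0 ≤ γ) (hX : X.TwoSidedLinkExpander γ) {i : ℕ}
    (hi : i + 1 ≤ d) (f : Finset V → ℝ) :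
    |X.ip (i + 1) (fun t => X.Mplus (i + 1) f t - X.lower (i + 1) f t) f|
      ≤ γ * X.ip (i + 1) f f := by
  rw [X.ip_sub (i + 1) (X.Mplus (i + 1) f) (X.lower (i + 1) f) f,
    X.Mform hi f f, show i + 1 + 1 = i + 2 from rfl, ← X.linkEe_sum hi f f,
    X.Lform hi f f]
  have hdown : ∑ r ∈ X.faces i, X.dist i r * X.down (i + 1) f r * X.down (i + 1) f r
      = ∑ r ∈ X.faces i, X.dist i r *
          (X.linkEv r (fun x => f (insert x r)) * X.linkEv r (fun x => f (insert x r))) := by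
    refine Finset.sum_congr rfl fun r hr => ?_
    rw [X.down_eq_linkEv (by omega) hr f]
    ring
  rw [hdown, ← Finset.sum_sub_distrib,
    Finset.sum_congr rfl (fun r (hr : r ∈ X.faces i) => show
      X.dist i r * X.linkEe r (fun x => f (insert x r)) (fun x => f (insert x r))
        - X.dist i r * (X.linkEv r (fun x => f (insert x r)) *
            X.linkEv r (fun x => f (insert x r)))
      = X.dist i r * (X.linkEe r (fun x => f (insert x r)) (fun x => f (insert x r))
          - X.linkEv r (fun x => f (insert x r)) * X.linkEv r (fun x => f (insert x r)))
      from by ring)]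
  calc |∑ r ∈ X.faces i, X.dist i r *
          (X.linkEe r (fun x => f (insert x r)) (fun x => f (insert x r))
            - X.linkEv r (fun x => f (insert x r)) * X.linkEv r (fun x => f (insert x r)))|
      ≤ ∑ r ∈ X.faces i, |X.dist i r *
          (X.linkEe r (fun x => f (insert x r)) (fun x => f (insert x r))
            - X.linkEv r (fun x => f (insert x r)) * X.linkEv r (fun x => f (insert x r)))| :=
        Finset.abs_sum_le_sum_abs _ _
    _ ≤ ∑ r ∈ X.faces i, X.dist i r *
          (γ * X.linkEv r (fun x => f (insert x r) ^ 2)) := by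
        refine Finset.sum_le_sum fun r hr => ?_
        rw [abs_mul, abs_of_nonneg (X.dist_nonneg' i r)]
        refine mul_le_mul_of_nonneg_left ?_ (X.dist_nonneg' i r)
        have hb := hX r (X.mem_allFaces_of_mem_faces hr)
          (by rw [(X.mem_faces.1 hr).1]; omega)
          (fun x => f (insert x r)) (fun x => f (insert x r))
        have key : γ * Real.sqrt (X.linkEv r (fun x => f (insert x r) ^ 2)) *
            Real.sqrt (X.linkEv r (fun x => f (insert x r) ^ 2))
            = γ * X.linkEv r (fun x => f (insert x r) ^ 2) := by
          rw [mul_assoc, Real.mul_self_sqrt (X.linkEv_sq_nonneg r _)]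
        exact le_trans hb (le_of_eq key)
    _ = γ * ∑ r ∈ X.faces i, X.dist i r * X.linkEv r (fun x => f (insert x r) ^ 2) := by
        rw [Finset.mul_sum]
        exact Finset.sum_congr rfl fun r _ => by ring
    _ = γ * X.ip (i + 1) f f := by rw [X.ip_self_eq hi f]
lemma ip_symm (j : ℕ) (u v : Finset V → ℝ) : X.ip j u v = X.ip j v u :=
  Finset.sum_congr rfl fun t _ => by ring

lemma ip_addl (j : ℕ) (u v z : Finset V → ℝ) :
    X.ip j (u + v) z = X.ip j u z + X.ip j v z := by
  unfold ip
  rw [← Finset.sum_add_distrib]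
  exact Finset.sum_congr rfl fun t _ => by simp only [Pi.add_apply]; ring

lemma ip_smull (j : ℕ) (c : ℝ) (u z : Finset V → ℝ) :
    X.ip j (c • u) z = c * X.ip j u z := by
  unfold ip
  rw [Finset.mul_sum]
  exact Finset.sum_congr rfl fun t _ => by simp only [Pi.smul_apply, smul_eq_mul]; ring

lemma ip_self_nonneg (j : ℕ) (u : Finset V → ℝ) : 0 ≤ X.ip j u u :=
  Finset.sum_nonneg fun t _ => by
    rw [mul_assoc]
    exact mul_nonneg (X.dist_nonneg' j t) (mul_self_nonneg _)

lemma down_add (m : ℕ) (u v : Finset V → ℝ) (r : Finset V) :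
    X.down m (u + v) r = X.down m u r + X.down m v r := by
  unfold down
  rw [← add_div, ← Finset.sum_add_distrib]
  congr 1
  exact Finset.sum_congr rfl fun s _ => by simp only [Pi.add_apply]; ring

lemma down_smul (m : ℕ) (c : ℝ) (u : Finset V → ℝ) (r : Finset V) :
    X.down m (c • u) r = c * X.down m u r := by
  unfold down
  have h : ∑ s ∈ (X.faces m).filter (fun s => r ⊆ s), X.dist m s * (c • u) s
      = c * ∑ s ∈ (X.faces m).filter (fun s => r ⊆ s), X.dist m s * u s := by
    rw [Finset.mul_sum]
    exact Finset.sum_congr rfl fun s _ => by simp only [Pi.smul_apply, smul_eq_mul]; ring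
  rw [h, mul_div_assoc]

lemma Mip_add {i : ℕ} (hi : i + 1 ≤ d) (u v z : Finset V → ℝ) :
    X.ip (i + 1) (X.Mplus (i + 1) (u + v)) z
      = X.ip (i + 1) (X.Mplus (i + 1) u) z + X.ip (i + 1) (X.Mplus (i + 1) v) z := by
  rw [X.Mform hi (u + v) z, X.Mform hi u z, X.Mform hi v z, ← Finset.sum_add_distrib]
  refine Finset.sum_congr rfl fun s _ => ?_
  have hQ : (∑ y ∈ s, ∑ x ∈ s.erase y, (u + v) (s.erase x) * z (s.erase y))
      = (∑ y ∈ s, ∑ x ∈ s.erase y, u (s.erase x) * z (s.erase y))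
        + ∑ y ∈ s, ∑ x ∈ s.erase y, v (s.erase x) * z (s.erase y) := by
    rw [← Finset.sum_add_distrib]
    refine Finset.sum_congr rfl fun y _ => ?_
    rw [← Finset.sum_add_distrib]
    exact Finset.sum_congr rfl fun x _ => by simp only [Pi.add_apply]; ring
  rw [hQ]
  ring

lemma Mip_smul {i : ℕ} (hi : i + 1 ≤ d) (c : ℝ) (u z : Finset V → ℝ) :
    X.ip (i + 1) (X.Mplus (i + 1) (c • u)) z = c * X.ip (i + 1) (X.Mplus (i + 1) u) z := by
  rw [X.Mform hi (c • u) z, X.Mform hi u z, Finset.mul_sum]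
  refine Finset.sum_congr rfl fun s _ => ?_
  have hQ : (∑ y ∈ s, ∑ x ∈ s.erase y, (c • u) (s.erase x) * z (s.erase y))
      = c * ∑ y ∈ s, ∑ x ∈ s.erase y, u (s.erase x) * z (s.erase y) := by
    rw [Finset.mul_sum]
    refine Finset.sum_congr rfl fun y _ => ?_
    rw [Finset.mul_sum]
    exact Finset.sum_congr rfl fun x _ => by simp only [Pi.smul_apply, smul_eq_mul]; ring
  rw [hQ]
  ring

lemma Mform_symm {i : ℕ} (hi : i + 1 ≤ d) (u v : Finset V → ℝ) :
    X.ip (i + 1) (X.Mplus (i + 1) u) v = X.ip (i + 1) (X.Mplus (i + 1) v) u := by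
  rw [X.Mform hi u v, X.Mform hi v u]
  refine Finset.sum_congr rfl fun s _ => ?_
  have hQ : (∑ y ∈ s, ∑ x ∈ s.erase y, u (s.erase x) * v (s.erase y))
      = ∑ y ∈ s, ∑ x ∈ s.erase y, v (s.erase x) * u (s.erase y) :=
    calc (∑ y ∈ s, ∑ x ∈ s.erase y, u (s.erase x) * v (s.erase y))
        = ∑ x ∈ s, ∑ y ∈ s.erase x, v (s.erase x) * u (s.erase y) :=
          Finset.sum_congr rfl fun _ _ => Finset.sum_congr rfl fun _ _ => mul_comm _ _
      _ = ∑ y ∈ s, ∑ x ∈ s.erase y, v (s.erase x) * u (s.erase y) :=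
          sum_erase_comm s _
  rw [hQ]

lemma Lip_add {i : ℕ} (hi : i + 1 ≤ d) (u v z : Finset V → ℝ) :
    X.ip (i + 1) (X.lower (i + 1) (u + v)) z
      = X.ip (i + 1) (X.lower (i + 1) u) z + X.ip (i + 1) (X.lower (i + 1) v) z := by
  rw [X.Lform hi (u + v) z, X.Lform hi u z, X.Lform hi v z, ← Finset.sum_add_distrib]
  exact Finset.sum_congr rfl fun r _ => by rw [X.down_add]; ring

lemma Lip_smul {i : ℕ} (hi : i + 1 ≤ d) (c : ℝ) (u z : Finset V → ℝ) :
    X.ip (i + 1) (X.lower (i + 1) (c • u)) z = c * X.ip (i + 1) (X.lower (i + 1) u) z := by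
  rw [X.Lform hi (c • u) z, X.Lform hi u z, Finset.mul_sum]
  exact Finset.sum_congr rfl fun r _ => by rw [X.down_smul]; ring

lemma Lip_symm {i : ℕ} (hi : i + 1 ≤ d) (u v : Finset V → ℝ) :
    X.ip (i + 1) (X.lower (i + 1) u) v = X.ip (i + 1) (X.lower (i + 1) v) u := by
  rw [X.Lform hi u v, X.Lform hi v u]
  exact Finset.sum_congr rfl fun r _ => by ring

end WSC

/-- Abstract operator-norm bound from quadratic-form bound for a symmetric form. -/
lemma quad_aux {E : Type*} [AddCommGroup E] [Module ℝ E]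
    (β B : E → E → ℝ) (γ : ℝ) (hγ0 : 0 ≤ γ)
    (βsym : ∀ x y, β x y = β y x)
    (βaddl : ∀ x y z, β (x + y) z = β x z + β y z)
    (βsmull : ∀ (c : ℝ) x y, β (c • x) y = c * β x y)
    (Bsym : ∀ x y, B x y = B y x)
    (Baddl : ∀ x y z, B (x + y) z = B x z + B y z)
    (Bsmull : ∀ (c : ℝ) x y, B (c • x) y = c * B x y)
    (Bnn : ∀ x, 0 ≤ B x x)
    (hbound : ∀ x, |β x x| ≤ γ * B x x)
    (x y : E) (hxy : β x y = B y y) :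
    B y y ≤ γ ^ 2 * B x x := by
  have βaddr : ∀ a b c : E, β a (b + c) = β a b + β a c := fun a b c => by
    rw [βsym, βaddl, βsym b a, βsym c a]
  have βsmulr : ∀ (t : ℝ) (a b : E), β a (t • b) = t * β a b := fun t a b => by
    rw [βsym, βsmull, βsym]
  have βnegr : ∀ a b : E, β a (-b) = -β a b := fun a b => by
    rw [← neg_one_smul ℝ b, βsmulr]; ring
  have Baddr : ∀ a b c : E, B a (b + c) = B a b + B a c := fun a b c => by
    rw [Bsym, Baddl, Bsym b a, Bsym c a]
  have Bsmulr : ∀ (t : ℝ) (a b : E), B a (t • b) = t * B a b := fun t a b => by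
    rw [Bsym, Bsmull, Bsym]
  have Bnegr : ∀ a b : E, B a (-b) = -B a b := fun a b => by
    rw [← neg_one_smul ℝ b, Bsmulr]; ring
  have Bnegl : ∀ a b : E, B (-a) b = -B a b := fun a b => by
    rw [Bsym, Bnegr, Bsym]
  have βnegl : ∀ a b : E, β (-a) b = -β a b := fun a b => by
    rw [βsym, βnegr, βsym]
  have h2 : ∀ u v : E, β u v ≤ γ / 2 * (B u u + B v v) := by
    intro u v
    have e1 : β (u + v) (u + v) = β u u + β u v + β u v + β v v := by
      rw [βaddl, βaddr, βaddr, βsym v u]; ring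
    have e2 : β (u - v) (u - v) = β u u - β u v - β u v + β v v := by
      rw [sub_eq_add_neg, βaddl, βaddr, βaddr, βnegl, βnegr, βnegr, βnegl, βsym v u]; ring
    have e3 : B (u + v) (u + v) = B u u + B u v + B u v + B v v := by
      rw [Baddl, Baddr, Baddr, Bsym v u]; ring
    have e4 : B (u - v) (u - v) = B u u - B u v - B u v + B v v := by
      rw [sub_eq_add_neg, Baddl, Baddr, Baddr, Bnegl, Bnegr, Bnegr, Bnegl, Bsym v u]; ring
    have b1 := hbound (u + v)
    have b2 := hbound (u - v)
    have a1 := le_abs_self (β (u + v) (u + v))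
    have a2 := neg_abs_le (β (u - v) (u - v))
    rw [e1] at b1 a1
    rw [e2] at b2 a2
    rw [e3] at b1
    rw [e4] at b2
    linarith
  have hscale : ∀ c : ℝ, c * β x y ≤ γ / 2 * (B x x + c ^ 2 * B y y) := by
    intro c
    have h := h2 x (c • y)
    rw [βsmulr] at h
    have hB : B (c • y) (c • y) = c ^ 2 * B y y := by
      rw [Bsmull, Bsmulr]; ring
    rw [hB] at h
    linarith
  by_contra hcon
  push_neg at hcon
  have hN : 0 < B y y := lt_of_le_of_lt (mul_nonneg (by positivity) (Bnn x)) hcon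
  rcases eq_or_lt_of_le hγ0 with hγz | hγpos
  · have h := h2 x y
    rw [← hγz, hxy] at h
    nlinarith [Bnn x]
  · have hγne : γ ≠ 0 := hγpos.ne'
    have hc := hscale (1 / γ)
    have h8 : 2 * γ * ((1 / γ) * β x y) = 2 * B y y := by
      rw [hxy]; field_simp
    have h9 : 2 * γ * (γ / 2 * (B x x + (1 / γ) ^ 2 * B y y)) = γ ^ 2 * B x x + B y y := by
      field_simp
    have h10 := mul_le_mul_of_nonneg_left hc (by positivity : (0:ℝ) ≤ 2 * γ)
    rw [h8, h9] at h10
    linarith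

/-- If `X` is a `d`-dimensional `γ`-two-sided link expander,
then for every `i < d` and every `f ∈ C^i`,
`|⟨(M⁺_i − U_{i-1}D_i) f, f⟩| ≤ γ ‖f‖²`; hence `X` is a `γ`-HDX. -/
theorem link_expander_is_hdx {V : Type} [DecidableEq V] [Fintype V] {d : ℕ}
    (X : WSC V d) (γ : ℝ) (hγ0 : 0 ≤ γ) (hX : X.TwoSidedLinkExpander γ) :
    (∀ i, i + 1 ≤ d → ∀ f : Finset V → ℝ,
      |X.ip (i + 1) (fun t => X.Mplus (i + 1) f t - X.lower (i + 1) f t) f|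
        ≤ γ * X.ip (i + 1) f f) ∧
    X.IsHDX γ := by

  have part1 : ∀ i, i + 1 ≤ d → ∀ f : Finset V → ℝ,
      |X.ip (i + 1) (fun t => X.Mplus (i + 1) f t - X.lower (i + 1) f t) f|
        ≤ γ * X.ip (i + 1) f f := fun i hi f => X.main1 hγ0 hX hi f
  refine ⟨part1, ?_⟩
  intro i hi f
  refine quad_aux
    (fun u v => X.ip (i + 1) (fun t => X.Mplus (i + 1) u t - X.lower (i + 1) u t) v)
    (fun u v => X.ip (i + 1) u v) γ hγ0 ?_ ?_ ?_ ?_ ?_ ?_ ?_ ?_ f _ rfl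
  · intro u v
    beta_reduce
    rw [X.ip_sub, X.ip_sub, X.Mform_symm hi, X.Lip_symm hi]
  · intro u v z
    beta_reduce
    rw [X.ip_sub, X.ip_sub, X.ip_sub, X.Mip_add hi, X.Lip_add hi]
    ring
  · intro c u v
    beta_reduce
    rw [X.ip_sub, X.ip_sub, X.Mip_smul hi, X.Lip_smul hi]
    ring
  · exact fun u v => X.ip_symm _ u v
  · exact fun u v z => X.ip_addl _ u v z
  · exact fun c u v => X.ip_smull _ c u v
  · exact fun u => X.ip_self_nonneg _ u
  · exact fun h => part1 i hi h
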